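/- Let (G,j,π) be an iterated extension of (KNP) by (PQR) whose Q-main extension (G,i,π) (with i := j∘i₀) has outer action θ. The group isomorphism Z^1(R,Z(K)^P) ≅ Aut(KNGQR), λ ↦ (g ↦ i(λ(φ̄(π(g))))·g), induces a group isomorphism from H^1(R,Z(K)^P) onto Out(KNGQR;K) := Aut(KNGQR)/𝒞_G(Z(K)^P), where 𝒞_G(Z(K)^P) is the group of inner automorphisms of G induced by elements of i(Z(K)^P); moreover 𝒞_G(Z(K)^P) equals the intersection of Aut(KNGQR) with the group of inner automorphisms of G induced by elements of i(K). -/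

import Mathlib

/-!
An automorphism `ξ` of `G` fixing `j N` and preserving `π` moves every `g` inside its `π`-fibre:
`ξ g = i (c g) * g`. Since `ξ` fixes `j N = ker (φ̄ ∘ π)`, `c` is constant on the cosets of `j N`, so
it is a function `λ` of `φ̄ (π g)`. The key fact is that `θ (π g)` acts on `Z(K)` as conjugation by
`g`; hence `ξ (g₁ * g₂) = ξ g₁ * ξ g₂` is the cocycle identity of `λ`, and conjugating by `x ∈ j N`
(which `ξ` fixes) shows that `i (c g)` centralizes `j N ⊇ i K`, i.e. `λ` takes values in `Z(K)^P`.
The same fact shows that conjugating `g ↦ i (λ (φ̄ (π g))) * g` by `i z` changes `λ` by the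
coboundary of `z⁻¹`; and an inner automorphism by `i k` that fixes `j N` forces `i k` to centralize
`j N`, so again `k ∈ Z(K)^P`.
-/

namespace IES

section OutDef

variable (K : Type*) [Group K]

/-- The subgroup of inner automorphisms of `K` inside `MulAut K`. -/
def Inn : Subgroup (MulAut K) := (MulAut.conj : K →* MulAut K).range

instance : (Inn K).Normal := by
  constructor
  rintro x ⟨k, rfl⟩ η
  refine ⟨η k, ?_⟩
  ext y
  simp [MulAut.conj_apply, MulAut.mul_apply, map_mul, map_inv]

/-- The outer automorphism group `Out K := Aut K / Inn K`. -/
abbrev Out := MulAut K ⧸ Inn K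

/-- Canonical projection `Aut K → Out K`. -/
def toOut : MulAut K →* Out K := QuotientGroup.mk' (Inn K)

lemma center_map (η : K ≃* K) {z : K} (hz : z ∈ Subgroup.center K) :
    η z ∈ Subgroup.center K := by
  rw [Subgroup.mem_center_iff] at hz ⊢
  intro g
  calc g * η z = η (η.symm g * z) := by rw [map_mul, η.apply_symm_apply]
    _ = η (z * η.symm g) := by rw [hz (η.symm g)]
    _ = η z * g := by rw [map_mul, η.apply_symm_apply]

/-- Restriction of automorphisms of `K` to its center. -/
def centerAut : MulAut K →* MulAut (Subgroup.center K) where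
  toFun η :=
    { toFun := fun z => ⟨η z.1, center_map K η z.2⟩
      invFun := fun z => ⟨η.symm z.1, center_map K η.symm z.2⟩
      left_inv := fun z => Subtype.ext (η.symm_apply_apply z.1)
      right_inv := fun z => Subtype.ext (η.apply_symm_apply z.1)
      map_mul' := fun a b => Subtype.ext (map_mul η a.1 b.1) }
  map_one' := by ext z; rfl
  map_mul' := fun a b => by ext z; rfl

lemma centerAut_inn : ∀ x ∈ Inn K, centerAut K x = 1 := by
  rintro x ⟨k, rfl⟩
  ext z
  have hz := z.2
  rw [Subgroup.mem_center_iff] at hz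
  show k * z.1 * k⁻¹ = z.1
  rw [hz k, mul_inv_cancel_right]

/-- The action of `Out K` on the center of `K`. -/
def outCenter : Out K →* MulAut (Subgroup.center K) :=
  QuotientGroup.lift (Inn K) (centerAut K) (centerAut_inn K)

end OutDef

section ModK

variable {K N : Type*} [Group K] [Group N]

/-- The group of automorphisms of `N` stabilizing the image of `K`. -/
def autK (i0 : K →* N) : Subgroup (MulAut N) where
  carrier := {η | ∀ n, η n ∈ i0.range ↔ n ∈ i0.range}
  one_mem' := by intro n; rw [MulAut.one_apply]
  mul_mem' := by
    intro a b ha hb n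
    rw [MulAut.mul_apply]
    exact (ha (b n)).trans (hb n)
  inv_mem' := by
    intro a ha n
    have h := ha (a⁻¹ n)
    rw [MulAut.apply_inv_self] at h
    exact h.symm

lemma mem_autK_iff {i0 : K →* N} {η : MulAut N} :
    η ∈ autK i0 ↔ ∀ n, η n ∈ i0.range ↔ n ∈ i0.range := Iff.rfl

/-- The subgroup of `autK i0` of inner automorphisms induced by elements of `i0 K`. -/
def cInn (i0 : K →* N) : Subgroup (autK i0) where
  carrier := {η | ∃ k : K, (η : MulAut N) = MulAut.conj (i0 k)}
  one_mem' := ⟨1, by simp⟩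
  mul_mem' := by
    rintro a b ⟨k1, h1⟩ ⟨k2, h2⟩
    exact ⟨k1 * k2, by rw [Subgroup.coe_mul, h1, h2, ← map_mul, ← map_mul]⟩
  inv_mem' := by
    rintro a ⟨k, h⟩
    exact ⟨k⁻¹, by rw [Subgroup.coe_inv, h, ← map_inv, ← map_inv]⟩

lemma conj_conj_eq (η : MulAut N) (x : N) :
    η * MulAut.conj x * η⁻¹ = MulAut.conj (η x) := by
  ext y
  simp [MulAut.conj_apply, MulAut.mul_apply, map_mul, map_inv]

instance (i0 : K →* N) : (cInn i0).Normal := by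
  constructor
  rintro c ⟨k, hk⟩ g
  obtain ⟨k', hk'⟩ := (g.2 (i0 k)).mpr ⟨k, rfl⟩
  refine ⟨k', ?_⟩
  rw [Subgroup.coe_mul, Subgroup.coe_mul, Subgroup.coe_inv, hk, conj_conj_eq, hk']

/-- The mod-`K` outer automorphism group `Out(N;K)`. -/
abbrev OutNK (i0 : K →* N) := ↥(autK i0) ⧸ cInn i0

/-- Canonical projection onto the mod-`K` outer automorphism group. -/
def mkNK (i0 : K →* N) : ↥(autK i0) →* OutNK i0 := QuotientGroup.mk' (cInn i0)

end ModK


section Cocycles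

variable {K P Q R : Type*} [Group K] [Group P] [Group Q] [Group R]

/-- Normalized 1-cocycles of `Q` with values in `Z(K)`, for the action induced by `θ`. -/
def IsZ1Q (θ : Q →* Out K) (lam : Q → ↥(Subgroup.center K)) : Prop :=
  lam 1 = 1 ∧ ∀ q1 q2 : Q, lam (q1 * q2) = lam q1 * outCenter K (θ q1) (lam q2)

/-- Normalized 1-cocycles of `P` with values in `Z(K)`, for the action induced by `θ ∘ j̄`. -/
def IsZ1P (θ : Q →* Out K) (jb : P →* Q) (lam : P → ↥(Subgroup.center K)) : Prop :=
  lam 1 = 1 ∧ ∀ p1 p2 : P, lam (p1 * p2) = lam p1 * outCenter K (θ (jb p1)) (lam p2)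

/-- Normalized 1-cocycles of `R` with values in `Z(K)^P`, where the action `θ₀` of `R`
is expressed via arbitrary `φ̄`-preimages in `Q`. -/
def IsZ1R (θ : Q →* Out K) (jb : P →* Q) (fb : Q →* R)
    (lam : R → ↥(Subgroup.center K)) : Prop :=
  lam 1 = 1 ∧
  (∀ (r : R) (p : P), outCenter K (θ (jb p)) (lam r) = lam r) ∧
  ∀ q1 q2 : Q, lam (fb q1 * fb q2) = lam (fb q1) * outCenter K (θ q1) (lam (fb q2))

/-- Normalized 2-cocycles of `R` with values in `Z(K)^P`. -/
def IsZ2R (θ : Q →* Out K) (jb : P →* Q) (fb : Q →* R)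
    (d : R → R → ↥(Subgroup.center K)) : Prop :=
  (∀ r : R, d 1 r = 1 ∧ d r 1 = 1) ∧
  (∀ (r1 r2 : R) (p : P), outCenter K (θ (jb p)) (d r1 r2) = d r1 r2) ∧
  ∀ (q1 : Q) (r2 r3 : R),
    d (fb q1) r2 * d (fb q1 * r2) r3 = outCenter K (θ q1) (d r2 r3) * d (fb q1) (r2 * r3)

/-- The cohomology class of a 1-cocycle of `P` is fixed by the `R`-action. -/
def RFixed (θ : Q →* Out K) (jb : P →* Q) (lam : P → ↥(Subgroup.center K)) : Prop :=
  ∀ q : Q, ∃ z0 : ↥(Subgroup.center K), ∀ p p' : P,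
    jb p' = q⁻¹ * jb p * q →
      outCenter K (θ q) (lam p') = z0⁻¹ * outCenter K (θ (jb p)) z0 * lam p

end Cocycles

open Function Subgroup

lemma coe_outCenter_toOut {K : Type*} [Group K] (κ : MulAut K) (z : center K) :
    (outCenter K (toOut K κ) z : K) = κ z :=
  rfl

section OuterAction

variable {K N P Q G : Type*} [Group K] [Group N] [Group P] [Group Q] [Group G]
  {i : K →* G} {π : G →* Q} {θ : Q →* Out K}

noncomputable def restrictConj (hi : Injective i) [i.range.Normal] (g : G) : MulAut K :=
  (MonoidHom.ofInjective hi).trans ((MulAut.conjNormal g).trans (MonoidHom.ofInjective hi).symm)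

lemma map_restrictConj (hi : Injective i) [i.range.Normal] (g : G) (k : K) :
    i (restrictConj hi g k) = g * i k * g⁻¹ := by
  simp [restrictConj, MonoidHom.apply_ofInjective_symm, MulAut.conjNormal_apply,
    MonoidHom.ofInjective_apply]

lemma map_outCenter_eq_conj (hi : Injective i) (hker : i.range = π.ker)
    (hθ : ∀ (g : G) (κ : MulAut K), (∀ k, i (κ k) = g * i k * g⁻¹) → θ (π g) = toOut K κ)
    (g : G) (z : center K) : i (outCenter K (θ (π g)) z) = g * i z * g⁻¹ := by
  have : i.range.Normal := hker ▸ π.normal_ker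
  rw [hθ g _ (map_restrictConj hi g), coe_outCenter_toOut, map_restrictConj]

lemma outCenter_eq_self_iff_forall_commute {j : N →* G} {π0 : N →* P} {jb : P →* Q}
    (hi : Injective i) (hπ0 : Surjective π0) (hcomm : π.comp j = jb.comp π0)
    (hact : ∀ g z, i (outCenter K (θ (π g)) z) = g * i z * g⁻¹) (z : center K) :
    (∀ p, outCenter K (θ (jb p)) z = z) ↔ ∀ n, Commute (j n) (i z) := by
  have key (n : N) : outCenter K (θ (jb (π0 n))) z = z ↔ Commute (j n) (i z) := by
    rw [← MonoidHom.comp_apply jb, ← hcomm, MonoidHom.comp_apply, ← SetLike.coe_eq_coe,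
      ← hi.eq_iff, hact, mul_inv_eq_iff_eq_mul]
    rfl
  exact hπ0.forall.trans (forall_congr' key)

/-- Conjugating `g ↦ i (l (π g)) * g` by `i z` multiplies `l` by the coboundary of `z⁻¹`. -/
lemma conj_map_mul_eq (hact : ∀ g z, i (outCenter K (θ (π g)) z) = g * i z * g⁻¹)
    (l z : center K) (g : G) :
    i z * (i l * g) * (i z)⁻¹ = i ((l * (z * outCenter K (θ (π g)) z⁻¹) : center K) : K) * g := by
  have hlz : i z * i l = i l * i z := by rw [← map_mul, ← map_mul, mem_center_iff.mp l.2 z]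
  simp only [coe_mul, map_mul, hact, InvMemClass.coe_inv, map_inv]
  rw [← mul_assoc, hlz]
  group

lemma translate_eq_conj_iff (hi : Injective i) (hπ : Surjective π)
    (hact : ∀ g z, i (outCenter K (θ (π g)) z) = g * i z * g⁻¹) (a b : Q → center K)
    (z : center K) :
    (∀ g, i (b (π g) : K) * g = i z * (i (a (π g) : K) * g) * (i z)⁻¹) ↔
      ∀ q, b q = a q * (z * outCenter K (θ q) z⁻¹) := by
  simp only [conj_map_mul_eq hact, mul_left_inj, hi.eq_iff, SetLike.coe_eq_coe]
  exact (hπ.forall (p := fun q => b q = a q * (z * outCenter K (θ q) z⁻¹))).symm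

lemma exists_conj_iff_exists_coboundary (hi : Injective i) (hπ : Surjective π)
    (hact : ∀ g z, i (outCenter K (θ (π g)) z) = g * i z * g⁻¹) (F : center K → Prop)
    (hF : ∀ z, F z → F z⁻¹) (a b : Q → center K) :
    (∃ z, F z ∧ ∀ g, i (b (π g) : K) * g = i z * (i (a (π g) : K) * g) * (i z)⁻¹) ↔
      ∃ z0, F z0 ∧ ∀ q, b q = a q * (z0⁻¹ * outCenter K (θ q) z0) := by
  simp only [translate_eq_conj_iff hi hπ hact]
  constructor
  · rintro ⟨z, hz, h⟩
    exact ⟨z⁻¹, hF z hz, by simpa only [inv_inv] using h⟩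
  · rintro ⟨z0, hz0, h⟩
    exact ⟨z0⁻¹, hF z0 hz0, by simpa only [inv_inv] using h⟩

lemma exists_fixed_central_conj_iff {j : N →* G} {π0 : N →* P} {jb : P →* Q}
    (hi : Injective i) (hπ0 : Surjective π0) (hcomm : π.comp j = jb.comp π0)
    (hact : ∀ g z, i (outCenter K (θ (π g)) z) = g * i z * g⁻¹) {ξ : G → G}
    (hξi : ∀ k, ξ (i k) = i k) (hξj : ∀ n, ξ (j n) = j n) :
    (∃ z : center K, (∀ p, outCenter K (θ (jb p)) z = z) ∧ ∀ g, ξ g = i z * g * (i z)⁻¹) ↔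
      ∃ k : K, ∀ g, ξ g = i k * g * (i k)⁻¹ := by
  refine ⟨fun ⟨z, _, h⟩ => ⟨z, h⟩, fun ⟨k, hk⟩ => ?_⟩
  have hfixed (x : G) (hx : ξ x = x) : Commute x (i k) := by
    have := hk x
    rw [hx, eq_mul_inv_iff_mul_eq] at this
    exact this
  have hk_center : k ∈ center K :=
    mem_center_iff.mpr fun k' => hi (by rw [map_mul, map_mul]; exact (hfixed _ (hξi k')).eq)
  exact ⟨⟨k, hk_center⟩,
    (outCenter_eq_self_iff_forall_commute hi hπ0 hcomm hact _).mpr fun n => hfixed _ (hξj n), hk⟩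

end OuterAction

section Displacement

variable {K N R G : Type*} [Group K] [Group N] [Group R] [Group G]
  {i : K →* G} {ξ : MulAut G} {c : G → K}

lemma exists_displacement {Q : Type*} [Group Q] {π : G →* Q} (hker : i.range = π.ker)
    (hξ : ∀ g, π (ξ g) = π g) : ∃ c : G → K, ∀ g, ξ g = i (c g) * g := by
  have hmem (g : G) : ξ g * g⁻¹ ∈ i.range := by
    rw [hker, MonoidHom.mem_ker, map_mul, map_inv, hξ, mul_inv_cancel]
  choose c hc using hmem
  exact ⟨c, fun g => by rw [hc, inv_mul_cancel_right]⟩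

lemma map_displacement (hc : ∀ g, ξ g = i (c g) * g) (g : G) : i (c g) = ξ g * g⁻¹ := by
  rw [hc, mul_inv_cancel_right]

lemma displacement_one (hi : Injective i) (hc : ∀ g, ξ g = i (c g) * g) : c 1 = 1 :=
  hi (by rw [map_displacement hc, map_one, inv_one, mul_one, map_one])

lemma map_displacement_mul (hc : ∀ g, ξ g = i (c g) * g) (g₁ g₂ : G) :
    i (c (g₁ * g₂)) = i (c g₁) * (g₁ * i (c g₂) * g₁⁻¹) := by
  simp only [map_displacement hc, map_mul]
  group

lemma displacement_mul_of_apply_eq_self (hi : Injective i) (hc : ∀ g, ξ g = i (c g) * g)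
    {x : G} (hx : ξ x = x) (g : G) : c (g * x) = c g :=
  hi (by rw [map_displacement hc, map_displacement hc, map_mul, hx]; group)

lemma displacement_factorsThrough (hi : Injective i) (hc : ∀ g, ξ g = i (c g) * g)
    {j : N →* G} {φ : G →* R} (hξj : ∀ n, ξ (j n) = j n) (hker : j.range = φ.ker) :
    FactorsThrough c φ := by
  intro g₁ g₂ h
  obtain ⟨n, hn⟩ : g₁⁻¹ * g₂ ∈ j.range := by
    rw [hker, MonoidHom.mem_ker, map_mul, map_inv, h, inv_mul_cancel]
  rw [← eq_inv_mul_iff_mul_eq.mp hn, displacement_mul_of_apply_eq_self hi hc (hξj n)]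

lemma commute_map_displacement (hc : ∀ g, ξ g = i (c g) * g) {φ : G →* R}
    (hfac : FactorsThrough c φ) {x : G} (hx : ξ x = x) (hφx : φ x = 1) (g : G) :
    Commute x (i (c g)) := by
  have hxg : c (x * g) = c g := hfac (by rw [map_mul, hφx, one_mul])
  have hconj : i (c (x * g)) = x * i (c g) * x⁻¹ := by
    simp only [map_displacement hc, map_mul, hx]
    group
  rw [hxg, eq_mul_inv_iff_mul_eq] at hconj
  exact hconj.symm

end Displacement

lemma exists_isZ1R_displacement {K N P Q R G : Type*} [Group K] [Group N] [Group P] [Group Q]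
    [Group R] [Group G] {i : K →* G} {π : G →* Q} {θ : Q →* Out K} {j : N →* G} {π0 : N →* P}
    {jb : P →* Q} {fb : Q →* R} (hi : Injective i) (hπ : Surjective π) (hfb : Surjective fb)
    (hπ0 : Surjective π0) (hcomm : π.comp j = jb.comp π0) (hkerφ : j.range = (fb.comp π).ker)
    (hkerπ : i.range = π.ker) (hact : ∀ g z, i (outCenter K (θ (π g)) z) = g * i z * g⁻¹)
    {ξ : MulAut G} (hξi : ∀ k, ξ (i k) = i k) (hξj : ∀ n, ξ (j n) = j n)
    (hξπ : ∀ g, π (ξ g) = π g) :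
    ∃ lam : R → center K, IsZ1R θ jb fb lam ∧ ∀ g, ξ g = i (lam (fb (π g))) * g := by
  obtain ⟨c, hc⟩ := exists_displacement hkerπ hξπ
  have hfac : FactorsThrough c (fb.comp π) := displacement_factorsThrough hi hc hξj hkerφ
  have hφj (n : N) : (fb.comp π) (j n) = 1 := by
    rw [← MonoidHom.mem_ker, ← hkerφ]
    exact ⟨n, rfl⟩
  have hφi (k : K) : (fb.comp π) (i k) = 1 := by
    have hπi : π (i k) = 1 := by
      rw [← MonoidHom.mem_ker, ← hkerπ]
      exact ⟨k, rfl⟩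
    rw [MonoidHom.comp_apply, hπi, map_one]
  have hcent (g : G) : c g ∈ center K := mem_center_iff.mpr fun k => hi (by
    rw [map_mul, map_mul]
    exact (commute_map_displacement hc hfac (hξi k) (hφi k) g).eq)
  let c' : G → center K := fun g => ⟨c g, hcent g⟩
  have hlam (g : G) : extend (fb.comp π) c' 1 (fb (π g)) = c' g :=
    FactorsThrough.extend_apply (g := c') (fun _ _ h => Subtype.ext (hfac h)) 1 g
  refine ⟨extend (fb.comp π) c' 1, ⟨?_, fun r => ?_, fun q₁ q₂ => ?_⟩, fun g => by
    rw [hlam]; exact hc g⟩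
  · have h1 := hlam 1
    rw [map_one, map_one] at h1
    exact h1.trans (Subtype.ext (displacement_one hi hc))
  · obtain ⟨g, rfl⟩ := (hfb.comp hπ) r
    rw [comp_apply, hlam, outCenter_eq_self_iff_forall_commute hi hπ0 hcomm hact]
    exact fun n => commute_map_displacement hc hfac (hξj n) (hφj n) g
  · obtain ⟨g₁, rfl⟩ := hπ q₁
    obtain ⟨g₂, rfl⟩ := hπ q₂
    rw [← map_mul fb, ← map_mul π, hlam, hlam, hlam, ← SetLike.coe_eq_coe, ← hi.eq_iff]
    simp only [c', coe_mul, map_mul, hact, map_displacement_mul hc]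

theorem statement2_general
    {K P Q R N G : Type*} [Group K] [Group P] [Group Q] [Group R] [Group N] [Group G]
    (i0 : K →* N) (π0 : N →* P) (jb : P →* Q) (fb : Q →* R)
    (j : N →* G) (π : G →* Q) (θ : Q →* Out K)
    (hi0 : Function.Injective i0) (hπ0 : Function.Surjective π0)
    (hfb : Function.Surjective fb)
    (hj : Function.Injective j) (hπ : Function.Surjective π)
    (hcomm : π.comp j = jb.comp π0)
    (hkerφ : j.range = (fb.comp π).ker)
    (hkerπ : (j.comp i0).range = π.ker)
    (hθ : ∀ (g : G) (κ : MulAut K),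
      (∀ k, (j.comp i0) (κ k) = g * (j.comp i0) k * g⁻¹) → θ (π g) = toOut K κ) :
    -- surjectivity of Z¹ onto Aut(KNGQR) (so that the quotient map is onto)
    (∀ ξ : MulAut G, (∀ n, ξ (j n) = j n) → (∀ g, π (ξ g) = π g) →
      ∃ lam : R → ↥(Subgroup.center K), IsZ1R θ jb fb lam ∧
        ∀ g : G, ξ g = (j.comp i0) (lam (fb (π g)) : K) * g) ∧
    -- two cocycles have images differing by an inner automorphism induced by an
    -- element of i(Z(K)^P) iff they are cohomologous: the induced map on the
    -- quotients H¹(R,Z(K)^P) → Aut(KNGQR)/𝒞_G(Z(K)^P) is a bijection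
    (∀ lam1 lam2 : R → ↥(Subgroup.center K), IsZ1R θ jb fb lam1 → IsZ1R θ jb fb lam2 →
      ((∃ z : ↥(Subgroup.center K), (∀ p : P, outCenter K (θ (jb p)) z = z) ∧
          ∀ g : G, (j.comp i0) (lam2 (fb (π g)) : K) * g =
            (j.comp i0) (z : K) * ((j.comp i0) (lam1 (fb (π g)) : K) * g) *
              ((j.comp i0) (z : K))⁻¹) ↔
       (∃ z0 : ↥(Subgroup.center K), (∀ p : P, outCenter K (θ (jb p)) z0 = z0) ∧
          ∀ q : Q, lam2 (fb q) = lam1 (fb q) * (z0⁻¹ * outCenter K (θ q) z0)))) ∧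
    -- 𝒞_G(Z(K)^P) is the intersection of Aut(KNGQR) with the inner automorphisms of G
    -- induced by elements of i(K)
    (∀ ξ : MulAut G, (∀ n, ξ (j n) = j n) → (∀ g, π (ξ g) = π g) →
      ((∃ z : ↥(Subgroup.center K), (∀ p : P, outCenter K (θ (jb p)) z = z) ∧
          ∀ g : G, ξ g = (j.comp i0) (z : K) * g * ((j.comp i0) (z : K))⁻¹) ↔
       (∃ k : K, ∀ g : G, ξ g = (j.comp i0) k * g * ((j.comp i0) k)⁻¹))) := by
  have hi : Injective (j.comp i0) := hj.comp hi0
  have hact := map_outCenter_eq_conj hi hkerπ hθ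
  refine ⟨fun ξ hξj hξπ => ?_, fun lam1 lam2 _ _ => ?_, fun ξ hξj _ => ?_⟩
  · exact exists_isZ1R_displacement hi hπ hfb hπ0 hcomm hkerφ hkerπ hact (fun k => hξj (i0 k))
      hξj hξπ
  · exact exists_conj_iff_exists_coboundary hi hπ hact _ (fun z hz p => by rw [map_inv, hz p])
      (fun q => lam1 (fb q)) (fun q => lam2 (fb q))
  · exact exists_fixed_central_conj_iff hi hπ0 hcomm hact (fun k => hξj (i0 k)) hξj

/-- The isomorphism `Z¹(R,Z(K)^P) ≃ Aut(KNGQR)` induces a group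
isomorphism `H¹(R,Z(K)^P) ≃ Out(KNGQR;K) = Aut(KNGQR)/𝒞_G(Z(K)^P)`; moreover
`𝒞_G(Z(K)^P) = 𝒞_G(K) ∩ Aut(KNGQR)`. -/
theorem statement2
    {K P Q R N G : Type*} [Group K] [Group P] [Group Q] [Group R] [Group N] [Group G]
    (i0 : K →* N) (π0 : N →* P) (jb : P →* Q) (fb : Q →* R)
    (j : N →* G) (π : G →* Q) (θ : Q →* Out K)
    (hi0 : Function.Injective i0) (hπ0 : Function.Surjective π0)
    (hker0 : i0.range = π0.ker)
    (hjb : Function.Injective jb) (hfb : Function.Surjective fb)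
    (hker1 : jb.range = fb.ker)
    (hj : Function.Injective j) (hπ : Function.Surjective π)
    (hcomm : π.comp j = jb.comp π0)
    (hkerφ : j.range = (fb.comp π).ker)
    (hkerπ : (j.comp i0).range = π.ker)
    (hθ : ∀ (g : G) (κ : MulAut K),
      (∀ k, (j.comp i0) (κ k) = g * (j.comp i0) k * g⁻¹) → θ (π g) = toOut K κ) :
    -- surjectivity of Z¹ onto Aut(KNGQR) (so that the quotient map is onto)
    (∀ ξ : MulAut G, (∀ n, ξ (j n) = j n) → (∀ g, π (ξ g) = π g) →
      ∃ lam : R → ↥(Subgroup.center K), IsZ1R θ jb fb lam ∧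
        ∀ g : G, ξ g = (j.comp i0) (lam (fb (π g)) : K) * g) ∧
    -- two cocycles have images differing by an inner automorphism induced by an
    -- element of i(Z(K)^P) iff they are cohomologous: the induced map on the
    -- quotients H¹(R,Z(K)^P) → Aut(KNGQR)/𝒞_G(Z(K)^P) is a bijection
    (∀ lam1 lam2 : R → ↥(Subgroup.center K), IsZ1R θ jb fb lam1 → IsZ1R θ jb fb lam2 →
      ((∃ z : ↥(Subgroup.center K), (∀ p : P, outCenter K (θ (jb p)) z = z) ∧
          ∀ g : G, (j.comp i0) (lam2 (fb (π g)) : K) * g =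
            (j.comp i0) (z : K) * ((j.comp i0) (lam1 (fb (π g)) : K) * g) *
              ((j.comp i0) (z : K))⁻¹) ↔
       (∃ z0 : ↥(Subgroup.center K), (∀ p : P, outCenter K (θ (jb p)) z0 = z0) ∧
          ∀ q : Q, lam2 (fb q) = lam1 (fb q) * (z0⁻¹ * outCenter K (θ q) z0)))) ∧
    -- 𝒞_G(Z(K)^P) is the intersection of Aut(KNGQR) with the inner automorphisms of G
    -- induced by elements of i(K)
    (∀ ξ : MulAut G, (∀ n, ξ (j n) = j n) → (∀ g, π (ξ g) = π g) →
      ((∃ z : ↥(Subgroup.center K), (∀ p : P, outCenter K (θ (jb p)) z = z) ∧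
          ∀ g : G, ξ g = (j.comp i0) (z : K) * g * ((j.comp i0) (z : K))⁻¹) ↔
       (∃ k : K, ∀ g : G, ξ g = (j.comp i0) k * g * ((j.comp i0) k)⁻¹))) :=
  statement2_general i0 π0 jb fb j π θ hi0 hπ0 hfb hj hπ hcomm hkerφ hkerπ hθ

end IES
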